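/- With p, the red/blue coloring, and the type assignment (A, B, C, D) as in the refined decomposition of a 1324-avoiding permutation, there is no value i ∈ {1,...,n−1} such that the entry with value i has type C and the entry with value i+1 has type B. -/

import Mathlib

inductive Letter | A | B | C | D
deriving DecidableEq

def NoCB (w : List Letter) : Prop :=
  List.Chain' (fun a b => ¬(a = Letter.C ∧ b = Letter.B)) w

noncomputable def hword (n : ℕ) : ℕ :=
  Nat.card {w : List Letter // w.length = n ∧ NoCB w}
def redCond (p : ℕ → ℕ) (c : List Bool) (i : ℕ) : Bool :=
  decide (¬ ∃ j < i, ∃ k < i, j < k ∧ c.getD j false = true ∧ c.getD k false = true ∧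
      p j < p i ∧ p i < p k) &&
  decide (¬ ∃ j < i, c.getD j false = false ∧ p j < p i)

def colorsAux (p : ℕ → ℕ) : ℕ → List Bool
  | 0 => []
  | i+1 => colorsAux p i ++ [redCond p (colorsAux p i) i]

/-- `isRed p i = true` iff the greedy procedure colors the entry in position `i` red. -/
def isRed (p : ℕ → ℕ) (i : ℕ) : Bool := (colorsAux p (i+1)).getD i false

/-- The type of the entry in position `i` of a permutation of `{0,...,n-1}`:
`A` = red left-to-right minimum of the red subsequence, `B` = other red,
`D` = blue right-to-left maximum of the blue subsequence, `C` = other blue. -/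
def typeOf (n : ℕ) (p : ℕ → ℕ) (i : ℕ) : Letter :=
  if isRed p i then
    if ∀ j < i, isRed p j = true → p i < p j then Letter.A else Letter.B
  else
    if ∀ j < n, i < j → isRed p j = false → p j < p i then Letter.D else Letter.C

def toNatFun {n : ℕ} (p : Equiv.Perm (Fin n)) : ℕ → ℕ :=
  fun i => if h : i < n then (p ⟨i, h⟩ : ℕ) else i

def Avoids1324 {n : ℕ} (p : Equiv.Perm (Fin n)) : Prop :=
  ¬ ∃ i₁ i₂ i₃ i₄ : Fin n, i₁ < i₂ ∧ i₂ < i₃ ∧ i₃ < i₄ ∧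
    p i₁ < p i₃ ∧ p i₃ < p i₂ ∧ p i₂ < p i₄

/-- The word `w(p)`: types by position. -/
def wWord {n : ℕ} (p : Equiv.Perm (Fin n)) (i : Fin n) : Letter :=
  typeOf n (toNatFun p) i

/-- The word `z(p)`: types by value. -/
def zWord {n : ℕ} (p : Equiv.Perm (Fin n)) (v : Fin n) : Letter :=
  typeOf n (toNatFun p) (p.symm v)

/- If `v` sits at position `i` with type C and `v + 1` at position `j` with type B, type C gives a
blue entry `k > i` above `v` and type B a red entry `a < j` below `v + 1`; since red and blue
entries are distinct, these values also avoid `v + 1` and `v`. A red entry is never larger than an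
earlier blue one, so `j < i`, and `a j i k` is a 1324 pattern. -/

lemma colorsAux_length (p : ℕ → ℕ) (m : ℕ) : (colorsAux p m).length = m := by
  induction m with
  | zero => rfl
  | succ m ih => simp [colorsAux, ih]

lemma colorsAux_getD (p : ℕ → ℕ) {i m : ℕ} (h : i < m) :
    (colorsAux p m).getD i false = isRed p i := by
  induction m with
  | zero => omega
  | succ m ih =>
    rcases Nat.lt_succ_iff_lt_or_eq.mp h with h | rfl
    · rw [colorsAux, List.getD_append _ _ _ _ (by rwa [colorsAux_length])]
      exact ih h
    · rfl

lemma isRed_eq_redCond (p : ℕ → ℕ) (i : ℕ) : isRed p i = redCond p (colorsAux p i) i := by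
  simp [isRed, colorsAux, colorsAux_length]

lemma le_of_isRed_of_blue_lt {p : ℕ → ℕ} {i j : ℕ} (hj : isRed p j = true) (hij : i < j)
    (hi : isRed p i = false) : p j ≤ p i := by
  rw [isRed_eq_redCond, redCond, Bool.and_eq_true, decide_eq_true_iff, decide_eq_true_iff] at hj
  by_contra! hlt
  exact hj.2 ⟨i, hij, by rwa [colorsAux_getD p hij], hlt⟩

lemma typeOf_eq_B {n : ℕ} {p : ℕ → ℕ} {i : ℕ} (h : typeOf n p i = Letter.B) :
    isRed p i = true ∧ ∃ a < i, isRed p a = true ∧ p a ≤ p i := by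
  unfold typeOf at h
  split_ifs at h with hred hA
  push Not at hA
  exact ⟨hred, hA⟩

lemma typeOf_eq_C {n : ℕ} {p : ℕ → ℕ} {i : ℕ} (h : typeOf n p i = Letter.C) :
    isRed p i = false ∧ ∃ k < n, i < k ∧ isRed p k = false ∧ p i ≤ p k := by
  unfold typeOf at h
  split_ifs at h with hred _ hD
  push Not at hD
  exact ⟨by simpa using hred, hD⟩

lemma toNatFun_val {n : ℕ} (p : Equiv.Perm (Fin n)) (i : Fin n) : toNatFun p i = p i := by
  simp [toNatFun]

section Perm

variable {n : ℕ} {p : Equiv.Perm (Fin n)}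

lemma wWord_eq_B {j : Fin n} (h : wWord p j = Letter.B) :
    isRed (toNatFun p) j = true ∧ ∃ a < j, isRed (toNatFun p) a = true ∧ p a < p j := by
  obtain ⟨hj, a, haj, ha, hle⟩ := typeOf_eq_B h
  have han : a < n := haj.trans j.isLt
  refine ⟨hj, ⟨a, han⟩, haj, ha, lt_of_le_of_ne ?_ (p.injective.ne (Fin.ne_of_lt haj))⟩
  rwa [Fin.le_def, ← toNatFun_val, ← toNatFun_val]

lemma wWord_eq_C {i : Fin n} (h : wWord p i = Letter.C) :
    isRed (toNatFun p) i = false ∧ ∃ k, i < k ∧ isRed (toNatFun p) k = false ∧ p i < p k := by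
  obtain ⟨hi, k, hkn, hik, hk, hle⟩ := typeOf_eq_C h
  refine ⟨hi, ⟨k, hkn⟩, hik, hk, lt_of_le_of_ne ?_ (p.injective.ne (Fin.ne_of_lt hik))⟩
  rwa [Fin.le_def, ← toNatFun_val, ← toNatFun_val]

end Perm

/-- In a 1324-avoiding permutation, there is no value v such that v has type C and
v+1 has type B. -/
theorem stmt6 {n : ℕ} (p : Equiv.Perm (Fin n)) (hp : Avoids1324 p) :
    ∀ (v : Fin n) (h : (v : ℕ) + 1 < n),
      ¬(zWord p v = Letter.C ∧ zWord p ⟨(v : ℕ) + 1, h⟩ = Letter.B) := by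
  rintro v h ⟨hC, hB⟩
  obtain ⟨hi, k, hik, hk, hik'⟩ := wWord_eq_C (i := p.symm v) hC
  obtain ⟨hj, a, haj, ha, haj'⟩ := wWord_eq_B (j := p.symm ⟨(v : ℕ) + 1, h⟩) hB
  set i := p.symm v with hi_def
  set j := p.symm ⟨(v : ℕ) + 1, h⟩ with hj_def
  have hpi : (p i : ℕ) = v := by simp [hi_def]
  have hpj : (p j : ℕ) = v + 1 := by simp [hj_def]
  have hne {x y : Fin n} (hx : isRed (toNatFun p) x = true) (hy : isRed (toNatFun p) y = false) :
      (p x : ℕ) ≠ p y := fun hxy => by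
    rw [p.injective (Fin.val_injective hxy)] at hx; simp [hx] at hy
  have hji : j < i := by
    refine lt_of_le_of_ne (not_lt.mp fun hij => ?_) fun hij => hne hj hi (by rw [hij])
    have := le_of_isRed_of_blue_lt hj hij hi
    rw [toNatFun_val, toNatFun_val] at this
    omega
  have hai : p a < p i := by
    have := hne ha hi
    rw [Fin.lt_def] at haj' ⊢
    omega
  have hjk : p j < p k := by
    have := hne hj hk
    rw [Fin.lt_def] at hik' ⊢
    omega
  exact hp ⟨a, j, i, k, haj, hji, hik, hai, by simp [Fin.lt_def, hpi, hpj], hjk⟩
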